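/- arXiv:2006.16781 — 3 statements merged into one kernel-verified Lean document; each statement's English description precedes it below -/
import Mathlib

section
/- Let f : ℝⁿ → ℝ be convex and differentiable with ∇f Lipschitz continuous on ℝⁿ with constant L(f) > 0 for the Euclidean norm, let A be a q × n real matrix whose rows are linearly independent, and let b ∈ ℝ^q. Let θ(λ) = inf_{x ∈ ℝⁿ} [ f(x) + λᵀ(Ax − b) ]. Then for any λ₁, λ₂ in the relative interior of dom(−θ) and any subgradients s₁ ∈ ∂(−θ)(λ₁), s₂ ∈ ∂(−θ)(λ₂), one has ⟨s₂ − s₁, λ₂ − λ₁⟩ ≥ (λ_min(AAᵀ)/L(f))·‖λ₂ − λ₁‖₂². -/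
/-!
With `ℓ(x, λ) = f x + ⟪λ, A x - b⟫`, one gradient step `y = x - (∇f x + Aᵀλ) / L` and the
descent lemma give `ℓ(y, λ) ≤ ℓ(x, λ) - ‖∇f x + Aᵀλ‖² / (2L)`, so
`θ λ = inf_x [ℓ(x, λ) - ‖∇f x + Aᵀλ‖² / (2L)]`. Each bracket is affine in `λ` minus a quadratic
with Hessian `AAᵀ / L ⪰ (λ_min(AAᵀ) / L) I`, hence `λ_min(AAᵀ) / L`-strongly concave, and an
infimum of such functions is again strongly concave where it is finite. Subgradients of the
strongly convex function `-θ` are then strongly monotone.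
-/

open scoped Matrix

noncomputable def lambdaMin {q : ℕ} (M : Matrix (Fin q) (Fin q) ℝ)
    (hM : M.IsHermitian) : ℝ := ⨅ i, hM.eigenvalues i

open scoped RealInnerProductSpace
open Set Filter Topology

variable {E : Type*} [NormedAddCommGroup E] [InnerProductSpace ℝ E]
variable {F : Type*} [NormedAddCommGroup F] [InnerProductSpace ℝ F]

theorem le_add_inner_add_norm_sq_of_lipschitz_gradient [CompleteSpace E] {f : E → ℝ}
    {f' : E → E} {L : ℝ} (hf : ∀ x, HasGradientAt f (f' x) x)
    (hLip : ∀ x y, ‖f' y - f' x‖ ≤ L * ‖y - x‖) (x y : E) :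
    f y ≤ f x + ⟪f' x, y - x⟫ + L / 2 * ‖y - x‖ ^ 2 := by
  set v := y - x
  let h : ℝ → ℝ := fun t ↦ f (x + t • v) - t * ⟪f' x, v⟫ - L / 2 * t ^ 2 * ‖v‖ ^ 2
  have hderiv (t : ℝ) : HasDerivAt h (⟪f' (x + t • v) - f' x, v⟫ - L * t * ‖v‖ ^ 2) t := by
    have hline : HasDerivAt (fun t : ℝ ↦ x + t • v) v t := by
      simpa using ((hasDerivAt_id t).smul_const v).const_add x
    have hcomp := (hf (x + t • v)).hasFDerivAt.comp_hasDerivAt t hline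
    refine ((hcomp.sub ((hasDerivAt_id t).mul_const ⟪f' x, v⟫)).sub
      (((hasDerivAt_pow 2 t).const_mul (L / 2)).mul_const (‖v‖ ^ 2))).congr_deriv ?_
    simp only [InnerProductSpace.toDual_apply_apply, inner_sub_left]
    ring
  have hslope {t : ℝ} (ht : 0 ≤ t) : ⟪f' (x + t • v) - f' x, v⟫ - L * t * ‖v‖ ^ 2 ≤ 0 := by
    have := calc
      ⟪f' (x + t • v) - f' x, v⟫ ≤ ‖f' (x + t • v) - f' x‖ * ‖v‖ := real_inner_le_norm _ _
      _ ≤ L * ‖t • v‖ * ‖v‖ := by gcongr; simpa using hLip x (x + t • v)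
      _ = L * t * ‖v‖ ^ 2 := by rw [norm_smul, Real.norm_of_nonneg ht]; ring
    linarith
  have hanti : AntitoneOn h (Icc 0 1) :=
    antitoneOn_of_hasDerivWithinAt_nonpos (convex_Icc 0 1)
      (fun t _ ↦ (hderiv t).continuousAt.continuousWithinAt)
      (fun t _ ↦ (hderiv t).hasDerivWithinAt) (fun t ht ↦ hslope (interior_subset ht).1)
  have := hanti (left_mem_Icc.2 zero_le_one) (right_mem_Icc.2 zero_le_one) zero_le_one
  simp only [h, v, one_smul, zero_smul, add_zero, add_sub_cancel] at this
  linarith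

theorem add_inner_gradient_step_le {f : E → ℝ} {f' : E → E} {L : ℝ} (hL : 0 < L)
    (hdescent : ∀ x y, f y ≤ f x + ⟪f' x, y - x⟫ + L / 2 * ‖y - x‖ ^ 2) (x c : E) :
    f (x - L⁻¹ • (f' x + c)) + ⟪c, x - L⁻¹ • (f' x + c)⟫ ≤
      f x + ⟪c, x⟫ - (2 * L)⁻¹ * ‖f' x + c‖ ^ 2 := by
  set g := f' x + c
  have hd := hdescent x (x - L⁻¹ • g)
  rw [sub_sub_cancel_left, inner_neg_right, inner_smul_right, norm_neg, norm_smul,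
    Real.norm_of_nonneg (inv_nonneg.2 hL.le)] at hd
  have hg : ⟪f' x, g⟫ + ⟪c, g⟫ = ‖g‖ ^ 2 := by
    rw [← inner_add_left, real_inner_self_eq_norm_sq]
  rw [inner_sub_right, inner_smul_right]
  have hL' : L ≠ 0 := hL.ne'
  field_simp at hd ⊢
  nlinarith [hg]

theorem strongConvexOn_univ_norm_sq : StrongConvexOn univ 2 (fun x : E ↦ ‖x‖ ^ 2) :=
  strongConvexOn_iff_convex.2 (by simpa using convexOn_const (0 : ℝ) convex_univ)

theorem StrongConvexOn.const_mul {s : Set E} {m k : ℝ} {f : E → ℝ} (hf : StrongConvexOn s m f)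
    (hk : 0 ≤ k) : StrongConvexOn s (k * m) (fun x ↦ k * f x) := by
  refine ⟨hf.1, fun x hx y hy a b ha hb hab ↦ ?_⟩
  have := mul_le_mul_of_nonneg_left (hf.2 hx hy ha hb hab) hk
  simp only [smul_eq_mul] at this ⊢
  linarith

theorem strongConvexOn_norm_add_map_sq {μ : ℝ} (B : F →ₗ[ℝ] E)
    (hB : ∀ v, μ * ‖v‖ ^ 2 ≤ ‖B v‖ ^ 2) (c : E) :
    StrongConvexOn univ (2 * μ) (fun v ↦ ‖c + B v‖ ^ 2) := by
  refine ⟨convex_univ, fun v _ w _ a b ha hb hab ↦ ?_⟩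
  have hmix := strongConvexOn_univ_norm_sq.2 (mem_univ (c + B v)) (mem_univ (c + B w)) ha hb hab
  have hcomb : a • (c + B v) + b • (c + B w) = c + B (a • v + b • w) := by
    rw [map_add, map_smul, map_smul]
    linear_combination (norm := module) hab • c
  rw [hcomb, add_sub_add_left_eq_sub, ← map_sub] at hmix
  have := mul_le_mul_of_nonneg_left (hB (v - w)) (mul_nonneg ha hb)
  simp only [smul_eq_mul] at hmix ⊢
  linarith

theorem StrongConvexOn.add_inner_add_le {s : Set E} {m : ℝ} {g : E → ℝ} {x y u : E}
    (hg : StrongConvexOn s m g) (hx : x ∈ s) (hy : y ∈ s)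
    (hu : ∀ z ∈ s, g x + ⟪u, z - x⟫ ≤ g z) :
    g x + ⟪u, y - x⟫ + m / 2 * ‖y - x‖ ^ 2 ≤ g y := by
  set K := m / 2 * ‖y - x‖ ^ 2 with hK
  have hbound : ∀ t ∈ Ioo (0 : ℝ) 1, ⟪u, y - x⟫ + K ≤ g y - g x + t * K := by
    rintro t ⟨ht0, ht1⟩
    have hconv := hg.2 hx hy (sub_nonneg.2 ht1.le) ht0.le (sub_add_cancel 1 t)
    have hsub := hu _ (hg.1 hx hy (sub_nonneg.2 ht1.le) ht0.le (sub_add_cancel 1 t))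
    rw [show (1 - t) • x + t • y - x = t • (y - x) by module, inner_smul_right] at hsub
    rw [norm_sub_rev] at hconv
    simp only [smul_eq_mul, ← hK] at hconv
    refine le_of_mul_le_mul_left ?_ ht0
    linarith
  have hlim : Tendsto (fun t ↦ g y - g x + t * K) (𝓝[>] 0) (𝓝 (g y - g x)) := by
    have hcont : Continuous fun t : ℝ ↦ g y - g x + t * K := by fun_prop
    simpa using (hcont.tendsto 0).mono_left nhdsWithin_le_nhds
  have := ge_of_tendsto hlim (eventually_of_mem (Ioo_mem_nhdsGT zero_lt_one) hbound)
  linarith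

theorem StrongConvexOn.mul_norm_sub_sq_le_inner {s : Set E} {m : ℝ} {g : E → ℝ} {x y u v : E}
    (hg : StrongConvexOn s m g) (hx : x ∈ s) (hy : y ∈ s)
    (hu : ∀ z ∈ s, g x + ⟪u, z - x⟫ ≤ g z) (hv : ∀ z ∈ s, g y + ⟪v, z - y⟫ ≤ g z) :
    m * ‖y - x‖ ^ 2 ≤ ⟪v - u, y - x⟫ := by
  have hxy := hg.add_inner_add_le hx hy hu
  have hyx := hg.add_inner_add_le hy hx hv
  rw [norm_sub_rev, ← neg_sub, inner_neg_right] at hyx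
  rw [inner_sub_left]
  linarith

theorem strongConcaveOn_toReal_of_eq_iInf_coe {ι : Type*} [Nonempty ι] {m : ℝ}
    {φ : ι → F → ℝ} (hφ : ∀ i, StrongConcaveOn univ m (φ i)) {θ : F → EReal}
    (hθ : ∀ v, θ v = ⨅ i, (φ i v : EReal)) :
    StrongConcaveOn {v | θ v ≠ ⊥} m (fun v ↦ (θ v).toReal) := by
  have hθ_ne_top (v : F) : θ v ≠ ⊤ :=
    ne_top_of_le_ne_top (EReal.coe_ne_top _)
      ((hθ v).trans_le (iInf_le _ (Classical.arbitrary ι)))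
  have hmid {v w : F} {a b : ℝ} (hv : θ v ≠ ⊥) (hw : θ w ≠ ⊥) (ha : 0 ≤ a) (hb : 0 ≤ b)
      (hab : a + b = 1) :
      ((a * (θ v).toReal + b * (θ w).toReal + a * b * (m / 2 * ‖v - w‖ ^ 2) : ℝ) : EReal) ≤
        θ (a • v + b • w) := by
    rw [hθ (a • v + b • w)]
    refine le_iInf fun i ↦ EReal.coe_le_coe_iff.2 ?_
    have hle {u : F} (hu : θ u ≠ ⊥) : (θ u).toReal ≤ φ i u := by
      simpa using EReal.toReal_le_toReal ((hθ u).trans_le (iInf_le _ i)) hu (EReal.coe_ne_top _)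
    have := (hφ i).2 (mem_univ v) (mem_univ w) ha hb hab
    simp only [smul_eq_mul] at this
    nlinarith [mul_le_mul_of_nonneg_left (hle hv) ha, mul_le_mul_of_nonneg_left (hle hw) hb]
  refine ⟨fun v hv w hw a b ha hb hab ↦
    ne_bot_of_le_ne_bot (EReal.coe_ne_bot _) (hmid hv hw ha hb hab),
    fun v hv w hw a b ha hb hab ↦ ?_⟩
  have := EReal.toReal_le_toReal (hmid hv hw ha hb hab) (EReal.coe_ne_bot _) (hθ_ne_top _)
  rwa [EReal.toReal_coe] at this

theorem EReal.le_toReal_sub_toReal_of_coe_le_neg_sub_neg {a b : EReal} {c : ℝ}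
    (ha : a ≠ ⊥) (ha' : a ≠ ⊤) (hb : b ≠ ⊥) (hb' : b ≠ ⊤) (h : (c : EReal) ≤ -b - -a) :
    c ≤ a.toReal - b.toReal := by
  lift a to ℝ using ⟨ha', ha⟩
  lift b to ℝ using ⟨hb', hb⟩
  rw [← EReal.coe_neg, ← EReal.coe_neg, ← EReal.coe_sub, EReal.coe_le_coe_iff] at h
  simp only [EReal.toReal_coe]
  linarith

noncomputable def dualFunction (f : E → ℝ) (A : E →ₗ[ℝ] F) (b : F) (v : F) : EReal :=
  ⨅ x, ((f x + ⟪v, A x - b⟫ : ℝ) : EReal)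

theorem dualFunction_ne_top (f : E → ℝ) (A : E →ₗ[ℝ] F) (b v : F) : dualFunction f A b v ≠ ⊤ :=
  ne_top_of_le_ne_top (EReal.coe_ne_top _) (iInf_le _ 0)

section Dual

variable [FiniteDimensional ℝ E] [FiniteDimensional ℝ F] {f : E → ℝ} {f' : E → E} {L μ : ℝ}

theorem strongConcaveOn_lagrangian_sub_norm_sq (hL : 0 < L) (A : E →ₗ[ℝ] F)
    (hA : ∀ v, μ * ‖v‖ ^ 2 ≤ ‖A.adjoint v‖ ^ 2) (b : F) (x : E) :
    StrongConcaveOn univ (μ / L)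
      (fun v ↦ f x + ⟪v, A x - b⟫ - (2 * L)⁻¹ * ‖f' x + A.adjoint v‖ ^ 2) := by
  have hq := (strongConvexOn_norm_add_map_sq A.adjoint hA (f' x)).const_mul
    (inv_nonneg.2 (by positivity : 0 ≤ 2 * L))
  have haff : ConcaveOn ℝ univ (fun v ↦ f x + ⟪v, A x - b⟫) :=
    (concaveOn_const (f x) convex_univ).add (((innerₗ F).flip (A x - b)).concaveOn convex_univ)
  show UniformConcaveOn _ _ _
  convert haff.uniformConcaveOn_zero.sub hq using 1
  · ext r
    simp only [Pi.add_apply, Pi.zero_apply, zero_add]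
    field_simp
  · rfl

theorem dualFunction_eq_iInf_sub_norm_sq (hL : 0 < L) (hf : ∀ x, HasGradientAt f (f' x) x)
    (hLip : ∀ x y, ‖f' y - f' x‖ ≤ L * ‖y - x‖) (A : E →ₗ[ℝ] F) (b v : F) :
    dualFunction f A b v =
      ⨅ x, ((f x + ⟪v, A x - b⟫ - (2 * L)⁻¹ * ‖f' x + A.adjoint v‖ ^ 2 : ℝ) : EReal) := by
  refine le_antisymm (le_iInf fun x ↦ ?_)
    (iInf_mono fun x ↦ EReal.coe_le_coe_iff.2 (sub_le_self _ (by positivity)))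
  set y := x - L⁻¹ • (f' x + A.adjoint v)
  have hstep := add_inner_gradient_step_le hL
    (le_add_inner_add_norm_sq_of_lipschitz_gradient hf hLip) x (A.adjoint v)
  refine (iInf_le _ y).trans (EReal.coe_le_coe_iff.2 ?_)
  rw [inner_sub_right, inner_sub_right, ← LinearMap.adjoint_inner_left,
    ← LinearMap.adjoint_inner_left]
  linarith

theorem dualFunction_subgradient_strongly_monotone (hL : 0 < L)
    (hf : ∀ x, HasGradientAt f (f' x) x) (hLip : ∀ x y, ‖f' y - f' x‖ ≤ L * ‖y - x‖)
    (A : E →ₗ[ℝ] F) (hA : ∀ v, μ * ‖v‖ ^ 2 ≤ ‖A.adjoint v‖ ^ 2) (b : F) {l₁ l₂ s₁ s₂ : F}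
    (hl₁ : dualFunction f A b l₁ ≠ ⊥) (hl₂ : dualFunction f A b l₂ ≠ ⊥)
    (hs₁ : ∀ v, ((⟪s₁, v - l₁⟫ : ℝ) : EReal) ≤ -dualFunction f A b v - -dualFunction f A b l₁)
    (hs₂ : ∀ v, ((⟪s₂, v - l₂⟫ : ℝ) : EReal) ≤ -dualFunction f A b v - -dualFunction f A b l₂) :
    μ / L * ‖l₂ - l₁‖ ^ 2 ≤ ⟪s₂ - s₁, l₂ - l₁⟫ := by
  set θ := dualFunction f A b
  have hconvex : StrongConvexOn {v | θ v ≠ ⊥} (μ / L) (-fun v ↦ (θ v).toReal) :=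
    UniformConcaveOn.neg <| strongConcaveOn_toReal_of_eq_iInf_coe
      (strongConcaveOn_lagrangian_sub_norm_sq hL A hA b)
      (dualFunction_eq_iInf_sub_norm_sq hL hf hLip A b)
  have hsubgradient {l s : F} (hl : θ l ≠ ⊥)
      (hs : ∀ v, ((⟪s, v - l⟫ : ℝ) : EReal) ≤ -θ v - -θ l) (v : F) (hv : θ v ≠ ⊥) :
      -(θ l).toReal + ⟪s, v - l⟫ ≤ -(θ v).toReal := by
    have := EReal.le_toReal_sub_toReal_of_coe_le_neg_sub_neg hl (dualFunction_ne_top f A b l) hv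
      (dualFunction_ne_top f A b v) (hs v)
    linarith
  exact hconvex.mul_norm_sub_sq_le_inner hl₁ hl₂ (hsubgradient hl₁ hs₁) (hsubgradient hl₂ hs₂)

end Dual

theorem EuclideanSpace.sum_mul_eq_inner {ι : Type*} [Fintype ι] (x y : EuclideanSpace ℝ ι) :
    ∑ i, x i * y i = ⟪x, y⟫ := by
  simp [PiLp.inner_apply, mul_comm]

open scoped MatrixOrder Matrix.Norms.L2Operator in
theorem lambdaMin_mul_norm_sq_le {q : ℕ} (M : Matrix (Fin q) (Fin q) ℝ) (hM : M.IsHermitian)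
    (v : EuclideanSpace ℝ (Fin q)) :
    lambdaMin M hM * ‖v‖ ^ 2 ≤ ⟪v, Matrix.toEuclideanLin M v⟫ := by
  have hle : algebraMap ℝ _ (lambdaMin M hM) ≤ M := by
    refine algebraMap_le_of_le_spectrum ?_ hM
    rw [hM.spectrum_real_eq_range_eigenvalues]
    rintro _ ⟨i, rfl⟩
    exact ciInf_le (Finite.bddBelow_range _) i
  have := (Matrix.le_iff.1 hle).dotProduct_mulVec_nonneg v
  rw [← real_inner_self_eq_norm_sq, EuclideanSpace.inner_eq_star_dotProduct,
    EuclideanSpace.inner_eq_star_dotProduct]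
  simpa [Matrix.sub_mulVec, Algebra.algebraMap_eq_smul_one, Matrix.smul_mulVec,
    dotProduct_comm v.ofLp] using this

theorem lambdaMin_mul_norm_sq_le_norm_adjoint_sq {q n : ℕ} (A : Matrix (Fin q) (Fin n) ℝ)
    (v : EuclideanSpace ℝ (Fin q)) :
    lambdaMin (A * Aᵀ) (Matrix.isHermitian_mul_conjTranspose_self A) * ‖v‖ ^ 2 ≤
      ‖(Matrix.toEuclideanLin A).adjoint v‖ ^ 2 := by
  calc _ ≤ ⟪v, Matrix.toEuclideanLin (A * Aᵀ) v⟫ := lambdaMin_mul_norm_sq_le _ _ v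
    _ = _ := by
      rw [← real_inner_self_eq_norm_sq, LinearMap.adjoint_inner_left,
        ← Matrix.toEuclideanLin_conjTranspose_eq_adjoint]
      simp [Matrix.toLpLin_apply, Matrix.mulVec_mulVec]

theorem subgradients_of_neg_dual_strongly_monotone_general
    {n q : ℕ} (f : EuclideanSpace ℝ (Fin n) → ℝ)
    (f' : EuclideanSpace ℝ (Fin n) → EuclideanSpace ℝ (Fin n))
    (hdiff : ∀ x, HasGradientAt f (f' x) x)
    (L : ℝ) (hL : 0 < L)
    (hLip : ∀ x y, ‖f' y - f' x‖ ≤ L * ‖y - x‖)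
    (A : Matrix (Fin q) (Fin n) ℝ)
    (b : EuclideanSpace ℝ (Fin q))
    (θ : EuclideanSpace ℝ (Fin q) → EReal)
    (hθ : θ = fun lam => ⨅ x : EuclideanSpace ℝ (Fin n),
      ((f x + ∑ i, lam i * (A.mulVec x i - b i) : ℝ) : EReal)) :
    ∀ l1 ∈ intrinsicInterior ℝ {lam : EuclideanSpace ℝ (Fin q) | θ lam ≠ ⊥},
    ∀ l2 ∈ intrinsicInterior ℝ {lam : EuclideanSpace ℝ (Fin q) | θ lam ≠ ⊥},
    ∀ s1 s2 : EuclideanSpace ℝ (Fin q),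
      (∀ mu : EuclideanSpace ℝ (Fin q),
        ((∑ i, s1 i * (mu i - l1 i) : ℝ) : EReal) ≤ (- θ mu) - (- θ l1)) →
      (∀ mu : EuclideanSpace ℝ (Fin q),
        ((∑ i, s2 i * (mu i - l2 i) : ℝ) : EReal) ≤ (- θ mu) - (- θ l2)) →
      (lambdaMin (A * Aᵀ) (Matrix.isHermitian_mul_conjTranspose_self A) / L)
          * ‖l2 - l1‖ ^ 2
        ≤ ∑ i, (s2 i - s1 i) * (l2 i - l1 i) := by
  intro l1 hl1 l2 hl2 s1 s2 hs1 hs2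
  have hθ' : θ = dualFunction f (Matrix.toEuclideanLin A) b := by
    subst hθ
    funext v
    unfold dualFunction
    congr! 3 with x
    rw [← EuclideanSpace.sum_mul_eq_inner]
    rfl
  subst hθ'
  simp only [← PiLp.sub_apply, EuclideanSpace.sum_mul_eq_inner] at hs1 hs2 ⊢
  exact dualFunction_subgradient_strongly_monotone hL hdiff hLip _
    (lambdaMin_mul_norm_sq_le_norm_adjoint_sq A) b (intrinsicInterior_subset hl1)
    (intrinsicInterior_subset hl2) hs1 hs2

/-- Under (H1)-(H2), for `λ₁, λ₂` in the relative interior of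
`dom(−θ)` and subgradients `sᵢ ∈ ∂(−θ)(λᵢ)`, one has
`⟨s₂ − s₁, λ₂ − λ₁⟩ ≥ (λ_min(AAᵀ)/L)‖λ₂ − λ₁‖₂²`. -/
theorem subgradients_of_neg_dual_strongly_monotone
    {n q : ℕ} (f : EuclideanSpace ℝ (Fin n) → ℝ)
    (f' : EuclideanSpace ℝ (Fin n) → EuclideanSpace ℝ (Fin n))
    (hconv : ConvexOn ℝ Set.univ f)
    (hdiff : ∀ x, HasGradientAt f (f' x) x)
    (L : ℝ) (hL : 0 < L)
    (hLip : ∀ x y, ‖f' y - f' x‖ ≤ L * ‖y - x‖)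
    (A : Matrix (Fin q) (Fin n) ℝ)
    (hA : LinearIndependent ℝ A)
    (b : EuclideanSpace ℝ (Fin q))
    (θ : EuclideanSpace ℝ (Fin q) → EReal)
    (hθ : θ = fun lam => ⨅ x : EuclideanSpace ℝ (Fin n),
      ((f x + ∑ i, lam i * (A.mulVec x i - b i) : ℝ) : EReal)) :
    ∀ l1 ∈ intrinsicInterior ℝ {lam : EuclideanSpace ℝ (Fin q) | θ lam ≠ ⊥},
    ∀ l2 ∈ intrinsicInterior ℝ {lam : EuclideanSpace ℝ (Fin q) | θ lam ≠ ⊥},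
    ∀ s1 s2 : EuclideanSpace ℝ (Fin q),
      (∀ mu : EuclideanSpace ℝ (Fin q),
        ((∑ i, s1 i * (mu i - l1 i) : ℝ) : EReal) ≤ (- θ mu) - (- θ l1)) →
      (∀ mu : EuclideanSpace ℝ (Fin q),
        ((∑ i, s2 i * (mu i - l2 i) : ℝ) : EReal) ≤ (- θ mu) - (- θ l2)) →
      (lambdaMin (A * Aᵀ) (Matrix.isHermitian_mul_conjTranspose_self A) / L)
          * ‖l2 - l1‖ ^ 2
        ≤ ∑ i, (s2 i - s1 i) * (l2 i - l1 i) :=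
  subgradients_of_neg_dual_strongly_monotone_general f f' hdiff L hL hLip A b θ hθ
end

section
/- Let f : ℝⁿ → ℝ be convex and differentiable with ∇f Lipschitz continuous on ℝⁿ with constant L(f) > 0 for the Euclidean norm, coercive (f(x) → +∞ as ‖x‖ → +∞), let A be a q × n real matrix whose rows are linearly independent, and let b ∈ ℝ^q. Then the value function v(c) = inf{ f(x) : Ax − b + c ≤ 0 }, c ∈ ℝ^q, is finite and convex on ℝ^q, differentiable at every c ∈ ℝ^q, and its gradient ∇v is Lipschitz continuous on ℝ^q with Lipschitz constant L(f)/λ_min(AAᵀ) for the Euclidean norm. -/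
/-!
Coercivity gives a minimizer `x(c)` for every `c`, and the value function `w(c) = f(x(c))` is
convex because the constraint `A x - b + c ≤ 0` is jointly affine in `(x, c)`. Any subgradient `λ`
of `w` at `c` is a Lagrange multiplier: `λ ≥ 0`, `⟪λ, A x(c) - b + c⟫ = 0` and
`∇f(x(c)) = -Aᵀλ`. For two parameters these conditions give
`⟪∇f(x₂) - ∇f(x₁), x₂ - x₁⟫ ≤ ⟪λ₁ - λ₂, c₁ - c₂⟫`; combined with the co-coercivity
`‖∇f y - ∇f x‖² ≤ L ⟪∇f y - ∇f x, y - x⟫` of convex `L`-smooth functions and with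
`‖Aᵀμ‖² ≥ λ_min(AAᵀ) ‖μ‖²`, this makes `c ↦ λ` Lipschitz with constant `L / λ_min(AAᵀ)`.
A function with a Lipschitz field of subgradients is differentiable, with that field as gradient.
-/

open scoped Matrix

open Set Filter InnerProductSpace
open scoped RealInnerProductSpace

section SmoothConvex

variable {H : Type*} [NormedAddCommGroup H] [InnerProductSpace ℝ H] [CompleteSpace H]
  {f : H → ℝ} {f' : H → H} {L : ℝ}

theorem HasGradientAt.hasDerivAt_comp_add_smul {g x d : H} {t : ℝ}
    (h : HasGradientAt f g (x + t • d)) :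
    HasDerivAt (fun s : ℝ => f (x + s • d)) ⟪g, d⟫_ℝ t := by
  have hline : HasDerivAt (fun s : ℝ => x + s • d) d t := by
    simpa using ((hasDerivAt_id t).smul_const d).const_add x
  have := h.hasFDerivAt.comp_hasDerivAt t hline
  simp only [toDual_apply_apply] at this
  exact this

theorem ConvexOn.add_inner_le_of_hasGradientAt (hf : ConvexOn ℝ univ f) {g x : H}
    (hg : HasGradientAt f g x) (y : H) : f x + ⟪g, y - x⟫_ℝ ≤ f y := by
  have hline : ConvexOn ℝ univ (fun s : ℝ => f (x + s • (y - x))) := by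
    simpa [Function.comp_def, AffineMap.lineMap_apply, add_comm] using
      hf.comp_affineMap (AffineMap.lineMap x y)
  have hderiv : HasDerivAt (fun s : ℝ => f (x + s • (y - x))) ⟪g, y - x⟫_ℝ 0 :=
    HasGradientAt.hasDerivAt_comp_add_smul (by simpa using hg)
  have hslope := hline.le_slope_of_hasDerivAt (mem_univ 0) (mem_univ 1) one_pos hderiv
  simp only [slope_def_field, zero_smul, add_zero, one_smul, add_sub_cancel, sub_zero,
    div_one] at hslope
  linarith

theorem le_add_inner_add_sq_of_lipschitz_gradient (hf : ∀ x, HasGradientAt f (f' x) x)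
    (hLip : ∀ x y, ‖f' y - f' x‖ ≤ L * ‖y - x‖) (x y : H) :
    f y ≤ f x + ⟪f' x, y - x⟫_ℝ + L / 2 * ‖y - x‖ ^ 2 := by
  set d := y - x
  let φ : ℝ → ℝ := fun t => f (x + t • d) - t * ⟪f' x, d⟫_ℝ - L / 2 * t ^ 2 * ‖d‖ ^ 2
  have hφ : ∀ t, HasDerivAt φ (⟪f' (x + t • d), d⟫_ℝ - ⟪f' x, d⟫_ℝ - L * t * ‖d‖ ^ 2) t := by
    intro t
    have h1 := ((hf (x + t • d)).hasDerivAt_comp_add_smul.sub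
      ((hasDerivAt_id t).mul_const ⟪f' x, d⟫_ℝ)).sub
      (((hasDerivAt_pow 2 t).const_mul (L / 2)).mul_const (‖d‖ ^ 2))
    exact h1.congr_deriv (by simp only [one_mul, Nat.cast_ofNat, Nat.reduceSub, pow_one]; ring)
  have hφ' : ∀ t ∈ interior (Icc (0 : ℝ) 1),
      ⟪f' (x + t • d), d⟫_ℝ - ⟪f' x, d⟫_ℝ - L * t * ‖d‖ ^ 2 ≤ 0 := by
    intro t ht
    rw [interior_Icc] at ht
    have := calc ⟪f' (x + t • d), d⟫_ℝ - ⟪f' x, d⟫_ℝ = ⟪f' (x + t • d) - f' x, d⟫_ℝ :=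
          (inner_sub_left ..).symm
      _ ≤ ‖f' (x + t • d) - f' x‖ * ‖d‖ := real_inner_le_norm _ _
      _ ≤ L * ‖t • d‖ * ‖d‖ := by gcongr; simpa using hLip x (x + t • d)
      _ = L * t * ‖d‖ ^ 2 := by rw [norm_smul, Real.norm_of_nonneg ht.1.le]; ring
    linarith
  have hanti := antitoneOn_of_hasDerivWithinAt_nonpos (convex_Icc 0 1)
    (HasDerivAt.continuousOn fun t _ => hφ t) (fun t _ => (hφ t).hasDerivWithinAt) hφ'
    (left_mem_Icc.2 zero_le_one) (right_mem_Icc.2 zero_le_one) zero_le_one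
  simp only [φ, d, one_smul, add_sub_cancel, zero_smul, add_zero] at hanti
  linarith

theorem ConvexOn.add_inner_add_sq_norm_sub_le (hconv : ConvexOn ℝ univ f)
    (hf : ∀ x, HasGradientAt f (f' x) x) (hL : 0 < L)
    (hLip : ∀ x y, ‖f' y - f' x‖ ≤ L * ‖y - x‖) (x y : H) :
    f x + ⟪f' x, y - x⟫_ℝ + ‖f' y - f' x‖ ^ 2 / (2 * L) ≤ f y := by
  -- `φ` is minimal at `x`, and the gradient step from `y` to `z` lowers it by `‖∇φ y‖² / (2L)`.
  let φ : H → ℝ := fun z => f z - ⟪f' x, z⟫_ℝ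
  have hφ : ∀ z, HasGradientAt φ (f' z - f' x) z := by
    intro z
    rw [hasGradientAt_iff_hasFDerivAt, map_sub]
    exact (hf z).hasFDerivAt.sub (toDual ℝ H (f' x)).hasFDerivAt
  have hφconv : ConvexOn ℝ univ φ :=
    hconv.sub ((innerSL ℝ (f' x)).toLinearMap.concaveOn convex_univ)
  have hφLip : ∀ z w, ‖(f' w - f' x) - (f' z - f' x)‖ ≤ L * ‖w - z‖ := by simpa using hLip
  set z := y - L⁻¹ • (f' y - f' x)
  have hmin : φ x ≤ φ z := by simpa using hφconv.add_inner_le_of_hasGradientAt (hφ x) z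
  have hdesc := le_add_inner_add_sq_of_lipschitz_gradient hφ hφLip y z
  have h1 : ⟪f' y - f' x, z - y⟫_ℝ = -(L⁻¹ * ‖f' y - f' x‖ ^ 2) := by
    rw [show z - y = -(L⁻¹ • (f' y - f' x)) by simp [z], inner_neg_right, real_inner_smul_right,
      real_inner_self_eq_norm_sq]
  have h2 : ‖z - y‖ ^ 2 = L⁻¹ ^ 2 * ‖f' y - f' x‖ ^ 2 := by
    rw [show z - y = -(L⁻¹ • (f' y - f' x)) by simp [z], norm_neg, norm_smul,
      Real.norm_of_nonneg (inv_nonneg.2 hL.le), mul_pow]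
  rw [h1, h2] at hdesc
  have h3 : L / 2 * (L⁻¹ ^ 2 * ‖f' y - f' x‖ ^ 2) = L⁻¹ * ‖f' y - f' x‖ ^ 2 / 2 := by
    field_simp
  have h4 : ‖f' y - f' x‖ ^ 2 / (2 * L) = L⁻¹ * ‖f' y - f' x‖ ^ 2 / 2 := by
    field_simp
  simp only [φ, inner_sub_right] at hmin hdesc ⊢
  linarith

theorem ConvexOn.sq_norm_sub_le_mul_inner (hconv : ConvexOn ℝ univ f)
    (hf : ∀ x, HasGradientAt f (f' x) x) (hL : 0 < L)
    (hLip : ∀ x y, ‖f' y - f' x‖ ≤ L * ‖y - x‖) (x y : H) :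
    ‖f' y - f' x‖ ^ 2 ≤ L * ⟪f' y - f' x, y - x⟫_ℝ := by
  have h1 := hconv.add_inner_add_sq_norm_sub_le hf hL hLip x y
  have h2 := hconv.add_inner_add_sq_norm_sub_le hf hL hLip y x
  rw [norm_sub_rev] at h2
  have h3 : ‖f' y - f' x‖ ^ 2 / (2 * L) + ‖f' y - f' x‖ ^ 2 / (2 * L)
      = ‖f' y - f' x‖ ^ 2 / L := by
    field_simp; ring
  rw [← div_le_iff₀' hL]
  simp only [inner_sub_left, inner_sub_right] at h1 h2 ⊢
  linarith

end SmoothConvex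

section Subgradient

theorem ConvexOn.exists_strongDual_add_le {E : Type*} [NormedAddCommGroup E] [NormedSpace ℝ E]
    {w : E → ℝ} (hw : ConvexOn ℝ univ w) (hc : Continuous w) (x : E) :
    ∃ φ : StrongDual ℝ E, ∀ y, w x + φ (y - x) ≤ w y := by
  have hopen : IsOpen {p : E × ℝ | p.1 ∈ univ ∧ w p.1 < p.2} := by
    simpa using isOpen_lt (hc.comp continuous_fst) continuous_snd
  obtain ⟨ℓ, hℓ⟩ := geometric_hahn_banach_open_point hw.convex_strict_epigraph hopen
    (x := (x, w x)) (by simp)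
  set α := ℓ (0, 1)
  have hsplit : ∀ u t, ℓ (u, t) = ℓ (u, 0) + t * α := by
    intro u t
    rw [← smul_eq_mul, ← map_smul, ← map_add]
    simp
  have hα : α < 0 := by
    have := hℓ (x, w x + 1) (by simp)
    rw [hsplit x (w x + 1), hsplit x (w x)] at this
    linarith
  have hbelow : ∀ y, ℓ (y - x, 0) ≤ (w y - w x) * -α := by
    intro y
    have hy : ℓ (y, 0) + w y * α ≤ ℓ (x, 0) + w x * α := by
      refine le_of_forall_pos_lt_add fun ε hε => ?_
      have := hℓ (y, w y + ε / -α) (by simpa using div_pos hε (neg_pos.2 hα))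
      rw [hsplit, hsplit x] at this
      have e : (w y + ε / -α) * α = w y * α - ε := by field_simp [hα.ne]; ring
      linarith
    have : ℓ (y - x, 0) = ℓ (y, 0) - ℓ (x, 0) := by rw [← map_sub]; simp
    linarith
  refine ⟨(-α)⁻¹ • ℓ.comp (ContinuousLinearMap.inl ℝ E ℝ), fun y => ?_⟩
  have := mul_le_mul_of_nonneg_left (hbelow y) (inv_nonneg.2 (neg_nonneg.2 hα.le))
  rw [mul_comm (w y - w x), ← mul_assoc, inv_mul_cancel₀ (neg_ne_zero.2 hα.ne), one_mul] at this
  simp only [FunLike.coe_smul, Pi.smul_apply, ContinuousLinearMap.comp_apply,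
    ContinuousLinearMap.inl_apply, smul_eq_mul]
  linarith

theorem ConvexOn.exists_subgradient {F : Type*} [NormedAddCommGroup F] [InnerProductSpace ℝ F]
    [FiniteDimensional ℝ F] {w : F → ℝ} (hw : ConvexOn ℝ univ w) (x : F) :
    ∃ g : F, ∀ y, w x + ⟪g, y - x⟫_ℝ ≤ w y := by
  obtain ⟨φ, hφ⟩ := hw.exists_strongDual_add_le
    (continuousOn_univ.mp (hw.continuousOn isOpen_univ)) x
  exact ⟨(toDual ℝ F).symm φ, by simpa using hφ⟩

theorem hasGradientAt_of_subgradient_of_lipschitz {F : Type*} [NormedAddCommGroup F]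
    [InnerProductSpace ℝ F] [CompleteSpace F] {w : F → ℝ} {g : F → F} {K : ℝ}
    (hsub : ∀ c c', w c + ⟪g c, c' - c⟫_ℝ ≤ w c') (hg : ∀ c c', ‖g c' - g c‖ ≤ K * ‖c' - c‖)
    (c : F) : HasGradientAt w (g c) c := by
  rw [hasGradientAt_iff_isLittleO]
  refine Asymptotics.IsBigO.trans_isLittleO (g := fun c' => ‖c' - c‖ ^ 2) ?_
    (Asymptotics.isLittleO_pow_sub_sub c one_lt_two)
  -- `0 ≤ w c' - w c - ⟪g c, c' - c⟫ ≤ ⟪g c' - g c, c' - c⟫ ≤ K ‖c' - c‖²`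
  refine Asymptotics.IsBigO.of_bound K (Eventually.of_forall fun c' => ?_)
  have hlow := hsub c c'
  have hup := hsub c' c
  have hmono : ⟪g c' - g c, c' - c⟫_ℝ ≤ K * ‖c' - c‖ ^ 2 := calc
    _ ≤ ‖g c' - g c‖ * ‖c' - c‖ := real_inner_le_norm _ _
    _ ≤ K * ‖c' - c‖ * ‖c' - c‖ := by gcongr; exact hg c c'
    _ = K * ‖c' - c‖ ^ 2 := by ring
  rw [Real.norm_eq_abs, abs_of_nonneg (by linarith), norm_pow, norm_norm]
  rw [← neg_sub c' c, inner_neg_right] at hup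
  rw [inner_sub_left] at hmono
  linarith

end Subgradient

theorem IsMinOn.biInf_coe_eq {α : Type*} {s : Set α} {f : α → ℝ} {a : α} (h : IsMinOn f s a)
    (ha : a ∈ s) : ⨅ x ∈ s, (f x : EReal) = f a :=
  le_antisymm (iInf₂_le a ha) (le_iInf₂ fun _ hx => EReal.coe_le_coe_iff.2 (h hx))

theorem tendsto_cocompact_atTop_of_forall_le_norm {E : Type*} [NormedAddCommGroup E]
    [ProperSpace E] {f : E → ℝ} (h : ∀ M : ℝ, ∃ R : ℝ, ∀ x : E, R ≤ ‖x‖ → M ≤ f x) :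
    Tendsto f (cocompact E) atTop :=
  tendsto_atTop.2 fun M => by
    obtain ⟨R, hR⟩ := h M
    exact ((tendsto_norm_cocompact_atTop (E := E)).eventually_ge_atTop R).mono hR

section FeasibleSet

variable {E : Type*} [AddCommGroup E] [Module ℝ E] [TopologicalSpace E]
  {m : Type*} (T : E →L[ℝ] EuclideanSpace ℝ m) (b : EuclideanSpace ℝ m)

def feasibleSet (c : EuclideanSpace ℝ m) : Set E := {x | ∀ i, T x i - b i + c i ≤ 0}

theorem isClosed_feasibleSet (c : EuclideanSpace ℝ m) : IsClosed (feasibleSet T b c) := by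
  simp only [feasibleSet, ofPred_forall]
  exact isClosed_iInter fun i => isClosed_le (by fun_prop) continuous_const

theorem mem_feasibleSet_sub (x : E) : x ∈ feasibleSet T b (b - T x) := by
  simp [feasibleSet]

theorem feasibleSet_nonempty (hT : Function.Surjective T) (c : EuclideanSpace ℝ m) :
    (feasibleSet T b c).Nonempty := by
  obtain ⟨x, hx⟩ := hT (b - c)
  exact ⟨x, by simpa [hx] using mem_feasibleSet_sub T b x⟩

variable {T b}

theorem smul_add_smul_mem_feasibleSet {x₁ x₂ : E} {c₁ c₂ : EuclideanSpace ℝ m} {a₁ a₂ : ℝ}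
    (ha₁ : 0 ≤ a₁) (ha₂ : 0 ≤ a₂) (ha : a₁ + a₂ = 1)
    (hx₁ : x₁ ∈ feasibleSet T b c₁) (hx₂ : x₂ ∈ feasibleSet T b c₂) :
    a₁ • x₁ + a₂ • x₂ ∈ feasibleSet T b (a₁ • c₁ + a₂ • c₂) := by
  intro i
  have h₁ := mul_nonpos_of_nonneg_of_nonpos ha₁ (hx₁ i)
  have h₂ := mul_nonpos_of_nonneg_of_nonpos ha₂ (hx₂ i)
  have hb : b i = a₁ * b i + a₂ * b i := by rw [← add_mul, ha, one_mul]
  simp only [map_add, map_smul, PiLp.add_apply, PiLp.smul_apply, smul_eq_mul]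
  linarith

theorem convexOn_comp_of_isMinOn {f : E → ℝ} (hf : ConvexOn ℝ univ f)
    {x : EuclideanSpace ℝ m → E} (hx : ∀ c, x c ∈ feasibleSet T b c)
    (hmin : ∀ c, IsMinOn f (feasibleSet T b c) (x c)) : ConvexOn ℝ univ (f ∘ x) := by
  refine ⟨convex_univ, fun c₁ _ c₂ _ a₁ a₂ ha₁ ha₂ ha => ?_⟩
  calc f (x (a₁ • c₁ + a₂ • c₂)) ≤ f (a₁ • x c₁ + a₂ • x c₂) :=
        hmin _ (smul_add_smul_mem_feasibleSet ha₁ ha₂ ha (hx c₁) (hx c₂))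
    _ ≤ a₁ • f (x c₁) + a₂ • f (x c₂) := hf.2 (mem_univ _) (mem_univ _) ha₁ ha₂ ha

end FeasibleSet

section Multipliers

variable {E : Type*} [NormedAddCommGroup E] [InnerProductSpace ℝ E]
  {m : Type*} [Fintype m] {T : E →L[ℝ] EuclideanSpace ℝ m} {b : EuclideanSpace ℝ m}
  {f : E → ℝ} {x : EuclideanSpace ℝ m → E} {c g : EuclideanSpace ℝ m}

theorem inner_nonpos_of_mem_feasibleSet (hg : ∀ i, 0 ≤ g i) {y : E}
    (hy : y ∈ feasibleSet T b c) : ⟪g, T y - b + c⟫_ℝ ≤ 0 := by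
  rw [PiLp.inner_apply]
  exact Finset.sum_nonpos fun i _ => by
    simpa [mul_comm] using mul_nonpos_of_nonneg_of_nonpos (hg i) (hy i)

theorem subgradient_nonneg (hx : ∀ c, x c ∈ feasibleSet T b c)
    (hmin : ∀ c, IsMinOn f (feasibleSet T b c) (x c))
    (hg : ∀ c', f (x c) + ⟪g, c' - c⟫_ℝ ≤ f (x c')) (i : m) : 0 ≤ g i := by
  classical
  set e := EuclideanSpace.single i (1 : ℝ)
  have hfeas : x c ∈ feasibleSet T b (c - e) := fun j => by
    have := hx c j
    by_cases hj : j = i <;> simp [e, hj] at this ⊢ <;> linarith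
  have := (hg (c - e)).trans (hmin (c - e) hfeas)
  simpa [e, EuclideanSpace.inner_single_right] using this

theorem subgradient_add_inner_le (hmin : ∀ c, IsMinOn f (feasibleSet T b c) (x c))
    (hg : ∀ c', f (x c) + ⟪g, c' - c⟫_ℝ ≤ f (x c')) (y : E) :
    f (x c) + ⟪g, b - T y - c⟫_ℝ ≤ f y :=
  (hg _).trans (hmin _ (mem_feasibleSet_sub T b y))

theorem inner_subgradient_eq_zero (hx : ∀ c, x c ∈ feasibleSet T b c)
    (hmin : ∀ c, IsMinOn f (feasibleSet T b c) (x c))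
    (hg : ∀ c', f (x c) + ⟪g, c' - c⟫_ℝ ≤ f (x c')) : ⟪g, T (x c) - b + c⟫_ℝ = 0 := by
  refine le_antisymm (inner_nonpos_of_mem_feasibleSet (subgradient_nonneg hx hmin hg) (hx c)) ?_
  have := subgradient_add_inner_le hmin hg (x c)
  rw [show b - T (x c) - c = -(T (x c) - b + c) by abel, inner_neg_right] at this
  linarith

theorem gradient_eq_neg_adjoint_subgradient [CompleteSpace E] {f' : E → E}
    (hf : ∀ y, HasGradientAt f (f' y) y) (hx : ∀ c, x c ∈ feasibleSet T b c)
    (hmin : ∀ c, IsMinOn f (feasibleSet T b c) (x c))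
    (hg : ∀ c', f (x c) + ⟪g, c' - c⟫_ℝ ≤ f (x c')) : f' (x c) = -(T.adjoint g) := by
  have hglobal : IsLocalMin (fun y => f y + ⟪T.adjoint g, y⟫_ℝ) (x c) := by
    refine Eventually.of_forall fun y => ?_
    have h₁ := subgradient_add_inner_le hmin hg y
    have h₂ := inner_subgradient_eq_zero hx hmin hg
    simp only [ContinuousLinearMap.adjoint_inner_left, inner_sub_right, inner_add_right] at h₁ h₂ ⊢
    linarith
  have hderiv : HasFDerivAt (fun y => f y + ⟪T.adjoint g, y⟫_ℝ)
      (toDual ℝ E (f' (x c) + T.adjoint g)) (x c) := by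
    rw [map_add]
    exact (hf _).hasFDerivAt.add (toDual ℝ E _).hasFDerivAt
  have := hglobal.hasFDerivAt_eq_zero hderiv
  rw [LinearIsometryEquiv.map_eq_zero_iff] at this
  exact eq_neg_of_add_eq_zero_left this

end Multipliers

section MultiplierLipschitz

variable {E : Type*} [NormedAddCommGroup E] [InnerProductSpace ℝ E] [CompleteSpace E]
  {m : Type*} [Fintype m] {T : E →L[ℝ] EuclideanSpace ℝ m} {b : EuclideanSpace ℝ m}
  {f : E → ℝ} {f' : E → E} {x : EuclideanSpace ℝ m → E}
  {g : EuclideanSpace ℝ m → EuclideanSpace ℝ m}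

theorem inner_gradient_sub_le_inner_subgradient_sub (hf : ∀ y, HasGradientAt f (f' y) y)
    (hx : ∀ c, x c ∈ feasibleSet T b c) (hmin : ∀ c, IsMinOn f (feasibleSet T b c) (x c))
    (hg : ∀ c c', f (x c) + ⟪g c, c' - c⟫_ℝ ≤ f (x c')) (c₁ c₂ : EuclideanSpace ℝ m) :
    ⟪f' (x c₂) - f' (x c₁), x c₂ - x c₁⟫_ℝ ≤ ⟪g c₁ - g c₂, c₁ - c₂⟫_ℝ := by
  have h₁₂ := inner_nonpos_of_mem_feasibleSet (subgradient_nonneg hx hmin (hg c₁)) (hx c₂)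
  have h₂₁ := inner_nonpos_of_mem_feasibleSet (subgradient_nonneg hx hmin (hg c₂)) (hx c₁)
  have h₁ := inner_subgradient_eq_zero hx hmin (hg c₁)
  have h₂ := inner_subgradient_eq_zero hx hmin (hg c₂)
  rw [gradient_eq_neg_adjoint_subgradient hf hx hmin (hg c₁),
    gradient_eq_neg_adjoint_subgradient hf hx hmin (hg c₂)]
  simp only [inner_sub_left, inner_sub_right, inner_add_right, inner_neg_left,
    ContinuousLinearMap.adjoint_inner_left] at h₁₂ h₂₁ h₁ h₂ ⊢
  linarith

theorem mul_norm_sub_le_of_subgradient {L κ : ℝ} (hconv : ConvexOn ℝ univ f)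
    (hf : ∀ y, HasGradientAt f (f' y) y) (hL : 0 < L)
    (hLip : ∀ y z, ‖f' z - f' y‖ ≤ L * ‖z - y‖)
    (hx : ∀ c, x c ∈ feasibleSet T b c) (hmin : ∀ c, IsMinOn f (feasibleSet T b c) (x c))
    (hg : ∀ c c', f (x c) + ⟪g c, c' - c⟫_ℝ ≤ f (x c'))
    (hκ : ∀ μ, κ * ‖μ‖ ^ 2 ≤ ‖T.adjoint μ‖ ^ 2) (c₁ c₂ : EuclideanSpace ℝ m) :
    κ * ‖g c₂ - g c₁‖ ≤ L * ‖c₂ - c₁‖ := by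
  set μ := g c₁ - g c₂
  have hTμ : T.adjoint μ = f' (x c₂) - f' (x c₁) := by
    rw [gradient_eq_neg_adjoint_subgradient hf hx hmin (hg c₁),
      gradient_eq_neg_adjoint_subgradient hf hx hmin (hg c₂), map_sub]
    abel
  have key : κ * ‖μ‖ * ‖μ‖ ≤ L * ‖c₁ - c₂‖ * ‖μ‖ := calc
    κ * ‖μ‖ * ‖μ‖ = κ * ‖μ‖ ^ 2 := by ring
    _ ≤ ‖f' (x c₂) - f' (x c₁)‖ ^ 2 := hTμ ▸ hκ μ
    _ ≤ L * ⟪f' (x c₂) - f' (x c₁), x c₂ - x c₁⟫_ℝ :=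
      hconv.sq_norm_sub_le_mul_inner hf hL hLip _ _
    _ ≤ L * ⟪μ, c₁ - c₂⟫_ℝ := by
      gcongr; exact inner_gradient_sub_le_inner_subgradient_sub hf hx hmin hg c₁ c₂
    _ ≤ L * (‖μ‖ * ‖c₁ - c₂‖) := by gcongr; exact real_inner_le_norm _ _
    _ = L * ‖c₁ - c₂‖ * ‖μ‖ := by ring
  rw [norm_sub_rev (g c₂), norm_sub_rev c₂]
  rcases (norm_nonneg μ).eq_or_lt with h | h
  · rw [← h, mul_zero]; positivity
  · exact le_of_mul_le_mul_right key h

end MultiplierLipschitz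

section Matrix

open Matrix
open scoped MatrixOrder

theorem Matrix.IsHermitian.iInf_eigenvalues_mul_dotProduct_self_le {m : Type*} [Fintype m]
    [DecidableEq m] {M : Matrix m m ℝ} (hM : M.IsHermitian) (x : m → ℝ) :
    (⨅ i, hM.eigenvalues i) * (x ⬝ᵥ x) ≤ x ⬝ᵥ M *ᵥ x := by
  have h : algebraMap ℝ (Matrix m m ℝ) (⨅ i, hM.eigenvalues i) ≤ M := by
    rw [algebraMap_le_iff_le_spectrum hM.isSelfAdjoint, hM.spectrum_real_eq_range_eigenvalues]
    rintro _ ⟨i, rfl⟩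
    exact ciInf_le (Set.finite_range _).bddBelow i
  simpa [sub_mulVec, Algebra.algebraMap_eq_smul_one, smul_mulVec, dotProduct_smul] using
    (le_iff.mp h).dotProduct_mulVec_nonneg x

variable {q n : ℕ} {A : Matrix (Fin q) (Fin n) ℝ}

theorem posDef_mul_transpose (hA : LinearIndependent ℝ A) : (A * Aᵀ).PosDef :=
  PosDef.mul_conjTranspose_self A (vecMul_injective_iff.2 hA)

theorem surjective_toEuclideanLin (hA : LinearIndependent ℝ A) :
    Function.Surjective (toEuclideanLin A) := by
  have hunit := (isUnit_iff_isUnit_det _).1 (posDef_mul_transpose hA).isUnit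
  obtain ⟨B, hB⟩ : ∃ B : Matrix (Fin n) (Fin q) ℝ, A * B = 1 :=
    ⟨Aᵀ * (A * Aᵀ)⁻¹, by rw [← Matrix.mul_assoc, mul_nonsing_inv _ hunit]⟩
  intro y
  exact ⟨WithLp.toLp 2 (B *ᵥ y), by ext i; simp [mulVec_mulVec, hB]⟩

theorem lambdaMin_mul_norm_sq_le_s5 (A : Matrix (Fin q) (Fin n) ℝ) (μ : EuclideanSpace ℝ (Fin q)) :
    lambdaMin (A * Aᵀ) (isHermitian_mul_conjTranspose_self A) * ‖μ‖ ^ 2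
      ≤ ‖(toEuclideanLin A).toContinuousLinearMap.adjoint μ‖ ^ 2 := by
  rw [← LinearMap.adjoint_toContinuousLinearMap, ← toEuclideanLin_conjTranspose_eq_adjoint]
  simp only [← real_inner_self_eq_norm_sq, EuclideanSpace.inner_eq_star_dotProduct, star_trivial,
    conjTranspose_eq_transpose_of_trivial, LinearMap.coe_toContinuousLinearMap', toLpLin_apply]
  rw [show Aᵀ *ᵥ μ.ofLp ⬝ᵥ Aᵀ *ᵥ μ.ofLp = μ.ofLp ⬝ᵥ (A * Aᵀ) *ᵥ μ.ofLp by
    rw [← mulVec_mulVec, dotProduct_mulVec μ.ofLp A, mulVec_transpose]]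
  exact (isHermitian_mul_conjTranspose_self A).iInf_eigenvalues_mul_dotProduct_self_le μ.ofLp

theorem norm_le_div_lambdaMin (hA : LinearIndependent ℝ A) {u : EuclideanSpace ℝ (Fin q)} {r : ℝ}
    (h : lambdaMin (A * Aᵀ) (isHermitian_mul_conjTranspose_self A) * ‖u‖ ≤ r) :
    ‖u‖ ≤ r / lambdaMin (A * Aᵀ) (isHermitian_mul_conjTranspose_self A) := by
  rcases isEmpty_or_nonempty (Fin q) with hq | hq
  · simp [Subsingleton.elim u 0, lambdaMin]
  · have hpos : 0 < lambdaMin (A * Aᵀ) (isHermitian_mul_conjTranspose_self A) := by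
      obtain ⟨i, hi⟩ := exists_eq_ciInf_of_finite
        (f := (isHermitian_mul_conjTranspose_self A).eigenvalues)
      exact lt_of_lt_of_eq ((posDef_mul_transpose hA).eigenvalues_pos i) hi
    rwa [le_div_iff₀ hpos, mul_comm]

end Matrix

/-- Under (H1)-(H2) with `f` coercive, the value function
`v(c) = inf{f(x) : Ax − b + c ≤ 0}` is finite and convex on `ℝ^q`, differentiable
everywhere, and `∇v` is Lipschitz with constant `L/λ_min(AAᵀ)`. -/
theorem value_function_differentiable_lipschitz_gradient
    {n q : ℕ} (f : EuclideanSpace ℝ (Fin n) → ℝ)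
    (f' : EuclideanSpace ℝ (Fin n) → EuclideanSpace ℝ (Fin n))
    (hconv : ConvexOn ℝ Set.univ f)
    (hdiff : ∀ x, HasGradientAt f (f' x) x)
    (L : ℝ) (hL : 0 < L)
    (hLip : ∀ x y, ‖f' y - f' x‖ ≤ L * ‖y - x‖)
    (hcoercive : ∀ M : ℝ, ∃ R : ℝ, ∀ x : EuclideanSpace ℝ (Fin n), R ≤ ‖x‖ → M ≤ f x)
    (A : Matrix (Fin q) (Fin n) ℝ)
    (hA : LinearIndependent ℝ A)
    (b : EuclideanSpace ℝ (Fin q))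
    (v : EuclideanSpace ℝ (Fin q) → EReal)
    (hv : v = fun c => ⨅ x ∈ {x : EuclideanSpace ℝ (Fin n) |
        ∀ i, A.mulVec x i - b i + c i ≤ 0}, ((f x : ℝ) : EReal)) :
    (∀ c, v c ≠ ⊥ ∧ v c ≠ ⊤) ∧
    ConvexOn ℝ Set.univ (fun c => (v c).toReal) ∧
    ∃ v' : EuclideanSpace ℝ (Fin q) → EuclideanSpace ℝ (Fin q),
      (∀ c, HasGradientAt (fun c => (v c).toReal) (v' c) c) ∧
      ∀ c1 c2, ‖v' c2 - v' c1‖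
        ≤ (L / lambdaMin (A * Aᵀ) (Matrix.isHermitian_mul_conjTranspose_self A))
          * ‖c2 - c1‖ := by
  set T := (Matrix.toEuclideanLin A).toContinuousLinearMap
  have hfc : Continuous f :=
    continuous_iff_continuousAt.2 fun x => (hdiff x).differentiableAt.continuousAt
  have hmin : ∀ c, ∃ x ∈ feasibleSet T b c, IsMinOn f (feasibleSet T b c) x := fun c => by
    obtain ⟨x₀, hx₀⟩ := feasibleSet_nonempty T b (surjective_toEuclideanLin hA) c
    exact hfc.continuousOn.exists_isMinOn' (isClosed_feasibleSet T b c) hx₀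
      (((tendsto_cocompact_atTop_of_forall_le_norm hcoercive).eventually_ge_atTop _).filter_mono
        inf_le_left)
  choose x hx hxmin using hmin
  have hvx : ∀ c, v c = f (x c) := fun c => by rw [hv]; exact (hxmin c).biInf_coe_eq (hx c)
  have hw : (fun c => (v c).toReal) = f ∘ x := funext fun c => by simp [hvx]
  have hwconv := convexOn_comp_of_isMinOn hconv hx hxmin
  choose g hg using hwconv.exists_subgradient
  have hg_lip : ∀ c₁ c₂, ‖g c₂ - g c₁‖
      ≤ L / lambdaMin (A * Aᵀ) (Matrix.isHermitian_mul_conjTranspose_self A) * ‖c₂ - c₁‖ :=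
    fun c₁ c₂ => by
      rw [div_mul_eq_mul_div]
      exact norm_le_div_lambdaMin hA (mul_norm_sub_le_of_subgradient hconv hdiff hL hLip hx hxmin
        hg (lambdaMin_mul_norm_sq_le_s5 A) c₁ c₂)
  refine ⟨fun c => by simp [hvx], hw ▸ hwconv, g,
    fun c => hw ▸ hasGradientAt_of_subgradient_of_lipschitz hg hg_lip c, hg_lip⟩
end

section
/- Let f : ℝⁿ → ℝ be convex and differentiable with ∇f Lipschitz continuous on ℝⁿ with constant L(f) > 0 for the Euclidean norm, coercive (f(x) → +∞ as ‖x‖ → +∞), let A be a q × n real matrix whose rows are linearly independent, and let b ∈ ℝ^q. Then the dual function θ(λ) = inf_{x ∈ ℝⁿ} [ f(x) + λᵀ(Ax − b) ] is strongly concave on the nonnegative orthant ℝ₊^q with constant of strong concavity λ_min(AAᵀ)/L(f) with respect to the Euclidean norm. -/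
/-!
The infimum over `x` of `f x + ⟪a, x⟫` is `(1/L)`-strongly concave in `a` when `∇f` is
`L`-Lipschitz: given `x`, evaluate the lower bounds at `a₁` and `a₂` at the shifted points
`x + (1 - t) • u` and `x - t • u` with `u = -(a₁ - a₂) / L`, and control `f` there by the quadratic
upper bound `f (x + d) ≤ f x + ⟪∇f x, d⟫ + L/2 ‖d‖²`; the first-order terms cancel in the convex
combination and the choice of `u` leaves a gain of `t (1 - t) ‖a₁ - a₂‖² / (2L)`. The Lagrangian
at `λ` is `f x + ⟪Aᵀλ, x⟫ - ⟪λ, b⟫`, so this applies with `a = Aᵀλ`, and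
`‖Aᵀμ‖² = ⟪μ, AAᵀμ⟫ ≥ λ_min(AAᵀ) ‖μ‖²`.
-/

open scoped Matrix

open RealInnerProductSpace Set

theorem posSemidef_sub_lambdaMin_smul_one {q : ℕ} {M : Matrix (Fin q) (Fin q) ℝ}
    (hM : M.IsHermitian) : (M - lambdaMin M hM • 1).PosSemidef := by
  have hconj : M - lambdaMin M hM • 1 = Unitary.conjStarAlgAut ℝ _ hM.eigenvectorUnitary
      (Matrix.diagonal fun i => hM.eigenvalues i - lambdaMin M hM) := by
    rw [← Matrix.diagonal_sub, map_sub, ← Matrix.smul_one_eq_diagonal, map_smul, map_one]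
    nth_rewrite 1 [hM.spectral_theorem]
    rfl
  rw [hconj, Unitary.conjStarAlgAut_apply,
    Matrix.IsUnit.posSemidef_star_right_conjugate_iff Unitary.isUnit_coe,
    Matrix.posSemidef_diagonal_iff]
  exact fun i => sub_nonneg.mpr (ciInf_le (finite_range _).bddBelow i)

theorem lambdaMin_mul_dotProduct_self_le {q : ℕ} {M : Matrix (Fin q) (Fin q) ℝ}
    (hM : M.IsHermitian) (v : Fin q → ℝ) : lambdaMin M hM * (v ⬝ᵥ v) ≤ v ⬝ᵥ (M *ᵥ v) := by
  have := (posSemidef_sub_lambdaMin_smul_one hM).dotProduct_mulVec_nonneg v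
  rwa [star_trivial, Matrix.sub_mulVec, Matrix.smul_mulVec, Matrix.one_mulVec, dotProduct_sub,
    dotProduct_smul, smul_eq_mul, sub_nonneg] at this

theorem lambdaMin_mul_norm_sq_le_norm_sq {m n : ℕ} (A : Matrix (Fin m) (Fin n) ℝ)
    (v : EuclideanSpace ℝ (Fin m)) :
    lambdaMin (A * Aᵀ) (Matrix.isHermitian_mul_conjTranspose_self A) * ‖v‖ ^ 2
      ≤ ‖Matrix.toEuclideanLin Aᵀ v‖ ^ 2 := by
  convert lambdaMin_mul_dotProduct_self_le (Matrix.isHermitian_mul_conjTranspose_self A) v using 1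
  · rw [← real_inner_self_eq_norm_sq, EuclideanSpace.inner_eq_star_dotProduct, star_trivial]
    rfl
  · rw [← real_inner_self_eq_norm_sq, EuclideanSpace.inner_eq_star_dotProduct, star_trivial,
      Matrix.ofLp_toLpLin, Matrix.toLin'_apply, Matrix.dotProduct_mulVec, Matrix.vecMul_transpose,
      Matrix.mulVec_mulVec, dotProduct_comm]
    rfl

theorem sum_mul_mulVec_sub_eq_inner {m n : ℕ} (A : Matrix (Fin m) (Fin n) ℝ)
    (b l : EuclideanSpace ℝ (Fin m)) (x : EuclideanSpace ℝ (Fin n)) :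
    ∑ i, l i * ((A *ᵥ x) i - b i) = ⟪Matrix.toEuclideanLin Aᵀ l, x⟫ - ⟪l, b⟫ := by
  rw [EuclideanSpace.inner_eq_star_dotProduct, EuclideanSpace.inner_eq_star_dotProduct,
    star_trivial, star_trivial, Matrix.ofLp_toLpLin, Matrix.toLin'_apply,
    Matrix.dotProduct_mulVec, Matrix.vecMul_transpose, dotProduct_comm, dotProduct_comm b]
  simp only [dotProduct, mul_sub, Finset.sum_sub_distrib]

section LipschitzGradient

variable {E : Type*} [NormedAddCommGroup E] [InnerProductSpace ℝ E] [CompleteSpace E]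
  {f : E → ℝ} {f' : E → E} {L : ℝ}

theorem quadratic_upper_bound_of_lipschitz_gradient (hf : ∀ x, HasGradientAt f (f' x) x)
    (hLip : ∀ x y, ‖f' y - f' x‖ ≤ L * ‖y - x‖) (x d : E) :
    f (x + d) ≤ f x + ⟪f' x, d⟫ + L / 2 * ‖d‖ ^ 2 := by
  have hφ : ∀ s : ℝ, HasDerivAt (fun s : ℝ => f (x + s • d)) ⟪f' (x + s • d), d⟫ s := fun s => by
    have hline : HasDerivAt (fun s : ℝ => x + s • d) d s := by
      simpa using ((hasDerivAt_id s).smul_const d).const_add x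
    simpa [Function.comp_def, InnerProductSpace.toDual_apply_apply] using
      (hf (x + s • d)).hasFDerivAt.comp_hasDerivAt s hline
  have hB : ∀ s : ℝ, HasDerivAt (fun s : ℝ => f x + s * ⟪f' x, d⟫ + L / 2 * s ^ 2 * ‖d‖ ^ 2)
      (⟪f' x, d⟫ + L * s * ‖d‖ ^ 2) s := fun s => by
    refine ((((hasDerivAt_id s).mul_const ⟪f' x, d⟫).const_add (f x)).add
      (((hasDerivAt_pow 2 s).const_mul (L / 2)).mul_const (‖d‖ ^ 2))).congr_deriv ?_
    simp only [Nat.cast_ofNat]; ring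
  have hslope : ∀ s ∈ Ico (0 : ℝ) 1, ⟪f' (x + s • d), d⟫ ≤ ⟪f' x, d⟫ + L * s * ‖d‖ ^ 2 := by
    rintro s ⟨hs, -⟩
    have hgrad : ‖f' (x + s • d) - f' x‖ ≤ L * (s * ‖d‖) := by
      simpa [norm_smul, abs_of_nonneg hs] using hLip x (x + s • d)
    calc ⟪f' (x + s • d), d⟫ = ⟪f' x, d⟫ + ⟪f' (x + s • d) - f' x, d⟫ := by
          rw [inner_sub_left]; ring
      _ ≤ ⟪f' x, d⟫ + ‖f' (x + s • d) - f' x‖ * ‖d‖ := by gcongr; exact real_inner_le_norm _ _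
      _ ≤ ⟪f' x, d⟫ + L * (s * ‖d‖) * ‖d‖ := by gcongr
      _ = ⟪f' x, d⟫ + L * s * ‖d‖ ^ 2 := by ring
  simpa using image_le_of_deriv_right_le_deriv_boundary
    (fun s _ => (hφ s).continuousAt.continuousWithinAt) (fun s _ => (hφ s).hasDerivWithinAt)
    (by simp) (fun s _ => (hB s).continuousAt.continuousWithinAt)
    (fun s _ => (hB s).hasDerivWithinAt) hslope (right_mem_Icc.mpr zero_le_one)

theorem strongConcave_hlower_add_inner_of_lipschitz_gradient
    (hf : ∀ x, HasGradientAt f (f' x) x) (hLip : ∀ x y, ‖f' y - f' x‖ ≤ L * ‖y - x‖)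
    {a₁ a₂ : E} {r₁ r₂ t : ℝ} (h₁ : ∀ z, r₁ ≤ f z + ⟪a₁, z⟫) (h₂ : ∀ z, r₂ ≤ f z + ⟪a₂, z⟫)
    (ht₀ : 0 ≤ t) (ht₁ : t ≤ 1) (x : E) :
    t * r₁ + (1 - t) * r₂ + t * (1 - t) / (2 * L) * ‖a₁ - a₂‖ ^ 2
      ≤ f x + ⟪t • a₁ + (1 - t) • a₂, x⟫ := by
  set u := -L⁻¹ • (a₁ - a₂)
  have hu_inner : ⟪a₁, u⟫ - ⟪a₂, u⟫ = -(‖a₁ - a₂‖ ^ 2 / L) := by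
    rw [← inner_sub_left, real_inner_smul_right, real_inner_self_eq_norm_sq]; ring
  have hu_norm : L * ‖u‖ ^ 2 = ‖a₁ - a₂‖ ^ 2 / L := by
    have hL : L * L⁻¹ * L⁻¹ = L⁻¹ := by simpa using inv_mul_mul_self L⁻¹
    rw [norm_smul, norm_neg, norm_inv, Real.norm_eq_abs, mul_pow, inv_pow, sq_abs]
    linear_combination ‖a₁ - a₂‖ ^ 2 * hL
  have e₁ := quadratic_upper_bound_of_lipschitz_gradient hf hLip x ((1 - t) • u)
  have e₂ := quadratic_upper_bound_of_lipschitz_gradient hf hLip x ((-t) • u)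
  have l₁ := h₁ (x + (1 - t) • u)
  have l₂ := h₂ (x + (-t) • u)
  simp only [inner_add_right, inner_add_left, real_inner_smul_right, real_inner_smul_left,
    norm_smul, mul_pow, Real.norm_eq_abs, sq_abs] at e₁ e₂ l₁ l₂ ⊢
  rw [mul_comm 2 L, ← div_div]
  linear_combination t * (l₁ + e₁) + (1 - t) * (l₂ + e₂) + t * (1 - t) * hu_inner
    + t * (1 - t) / 2 * hu_norm

end LipschitzGradient

theorem dual_function_strongly_concave_on_orthant_general
    {n q : ℕ} (f : EuclideanSpace ℝ (Fin n) → ℝ)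
    (f' : EuclideanSpace ℝ (Fin n) → EuclideanSpace ℝ (Fin n))
    (hdiff : ∀ x, HasGradientAt f (f' x) x)
    (L : ℝ) (hL : 0 < L)
    (hLip : ∀ x y, ‖f' y - f' x‖ ≤ L * ‖y - x‖)
    (A : Matrix (Fin q) (Fin n) ℝ)
    (b : EuclideanSpace ℝ (Fin q))
    (θ : EuclideanSpace ℝ (Fin q) → EReal)
    (hθ : θ = fun lam => ⨅ x : EuclideanSpace ℝ (Fin n),
      ((f x + ∑ i, lam i * (A.mulVec x i - b i) : ℝ) : EReal)) :
    ∀ l1 l2 : EuclideanSpace ℝ (Fin q), (∀ i, 0 ≤ l1 i) → (∀ i, 0 ≤ l2 i) →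
      ∀ r1 r2 : ℝ, θ l1 = (r1 : EReal) → θ l2 = (r2 : EReal) →
      ∀ t : ℝ, 0 ≤ t → t ≤ 1 →
      ((t * r1 + (1 - t) * r2
        + (lambdaMin (A * Aᵀ) (Matrix.isHermitian_mul_conjTranspose_self A) / L)
          * (t * (1 - t)) / 2 * ‖l1 - l2‖ ^ 2 : ℝ) : EReal)
        ≤ θ (t • l1 + (1 - t) • l2) := by
  subst hθ
  intro l1 l2 _ _ r1 r2 h1 h2 t ht0 ht1
  have hlower : ∀ {l : EuclideanSpace ℝ (Fin q)} {r : ℝ},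
      ⨅ x, ((f x + ∑ i, l i * ((A *ᵥ x) i - b i) : ℝ) : EReal) = r →
        ∀ z, r + ⟪l, b⟫ ≤ f z + ⟪Matrix.toEuclideanLin Aᵀ l, z⟫ := by
    intro l r h z
    have := EReal.coe_le_coe_iff.mp (h ▸ iInf_le _ z)
    rw [sum_mul_mulVec_sub_eq_inner] at this
    linarith
  refine le_iInf fun x => EReal.coe_le_coe_iff.mpr ?_
  have hconc := strongConcave_hlower_add_inner_of_lipschitz_gradient hdiff hLip
    (hlower h1) (hlower h2) ht0 ht1 x
  have hquad : lambdaMin (A * Aᵀ) (Matrix.isHermitian_mul_conjTranspose_self A) / L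
      * (t * (1 - t)) / 2 * ‖l1 - l2‖ ^ 2 ≤ t * (1 - t) / (2 * L)
        * ‖Matrix.toEuclideanLin Aᵀ l1 - Matrix.toEuclideanLin Aᵀ l2‖ ^ 2 := by
    have htt : 0 ≤ t * (1 - t) / (2 * L) := by
      have := sub_nonneg.mpr ht1
      positivity
    rw [← map_sub]
    calc _ = t * (1 - t) / (2 * L)
          * (lambdaMin (A * Aᵀ) (Matrix.isHermitian_mul_conjTranspose_self A) * ‖l1 - l2‖ ^ 2) := by
          ring
      _ ≤ _ := mul_le_mul_of_nonneg_left (lambdaMin_mul_norm_sq_le_norm_sq A (l1 - l2)) htt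
  rw [sum_mul_mulVec_sub_eq_inner, map_add, map_smul, map_smul]
  simp only [inner_add_left, real_inner_smul_left] at hconc ⊢
  linarith

/-- Under (H1)-(H2) with `f` coercive, the dual function
`θ(λ) = inf_x [f(x) + λᵀ(Ax − b)]` is strongly concave on the nonnegative
orthant `ℝ₊^q` with constant `λ_min(AAᵀ)/L` for the Euclidean norm. -/
theorem dual_function_strongly_concave_on_orthant
    {n q : ℕ} (f : EuclideanSpace ℝ (Fin n) → ℝ)
    (f' : EuclideanSpace ℝ (Fin n) → EuclideanSpace ℝ (Fin n))
    (hconv : ConvexOn ℝ Set.univ f)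
    (hdiff : ∀ x, HasGradientAt f (f' x) x)
    (L : ℝ) (hL : 0 < L)
    (hLip : ∀ x y, ‖f' y - f' x‖ ≤ L * ‖y - x‖)
    (hcoercive : ∀ M : ℝ, ∃ R : ℝ, ∀ x : EuclideanSpace ℝ (Fin n), R ≤ ‖x‖ → M ≤ f x)
    (A : Matrix (Fin q) (Fin n) ℝ)
    (hA : LinearIndependent ℝ A)
    (b : EuclideanSpace ℝ (Fin q))
    (θ : EuclideanSpace ℝ (Fin q) → EReal)
    (hθ : θ = fun lam => ⨅ x : EuclideanSpace ℝ (Fin n),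
      ((f x + ∑ i, lam i * (A.mulVec x i - b i) : ℝ) : EReal)) :
    ∀ l1 l2 : EuclideanSpace ℝ (Fin q), (∀ i, 0 ≤ l1 i) → (∀ i, 0 ≤ l2 i) →
      ∀ r1 r2 : ℝ, θ l1 = (r1 : EReal) → θ l2 = (r2 : EReal) →
      ∀ t : ℝ, 0 ≤ t → t ≤ 1 →
      ((t * r1 + (1 - t) * r2
        + (lambdaMin (A * Aᵀ) (Matrix.isHermitian_mul_conjTranspose_self A) / L)
          * (t * (1 - t)) / 2 * ‖l1 - l2‖ ^ 2 : ℝ) : EReal)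
        ≤ θ (t • l1 + (1 - t) • l2) :=
  dual_function_strongly_concave_on_orthant_general f f' hdiff L hL hLip A b θ hθ
end
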